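/- arXiv:2507.12310 — 3 statements merged into one kernel-verified Lean document; each statement's English description precedes it below -/
import Mathlib

section
/- For probability vectors p, q ∈ Prob(n), p majorizes q if and only if q can be obtained from p by a finite composition of T-transforms. -/
/-- The sum of the `k` largest entries of `r`. -/
noncomputable def topSum {n : ℕ} (r : Fin n → ℝ) (k : ℕ) : ℝ :=
  sSup {x : ℝ | ∃ s : Finset (Fin n), s.card = k ∧ x = ∑ i ∈ s, r i}

/-- Majorization for probability vectors: the sum of the `k` largest entries of `p`
is at least that of `q` for every `k`, with equality at `k = n`. -/
def MajP {n : ℕ} (p q : Fin n → ℝ) : Prop :=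
  (∀ k : ℕ, k ≤ n → topSum q k ≤ topSum p k) ∧ topSum p n = topSum q n

/-- A probability vector in `ℝⁿ`. -/
def ProbVec {n : ℕ} (p : Fin n → ℝ) : Prop :=
  (∀ i, 0 ≤ p i) ∧ ∑ i, p i = 1

/-- The permutation matrix of the transposition swapping `i` and `j`. -/
def swapMat {n : ℕ} (i j : Fin n) : Matrix (Fin n) (Fin n) ℝ :=
  fun a b => if a = Equiv.swap i j b then 1 else 0

/-- A `T`-transform: `T = t I + (1-t) Π` with `t ∈ [0,1]` and `Π` a transposition
permutation matrix swapping exactly two coordinates. -/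
def IsTTransform {n : ℕ} (T : Matrix (Fin n) (Fin n) ℝ) : Prop :=
  ∃ t : ℝ, t ∈ Set.Icc (0 : ℝ) 1 ∧ ∃ i j : Fin n, i ≠ j ∧
    T = t • (1 : Matrix (Fin n) (Fin n) ℝ) + (1 - t) • swapMat i j

/-! A T-transform averages two coordinates, so a sum over `k` coordinates of `T *ᵥ p` is a
convex combination of two sums over `k` coordinates of `p`: T-transforms can only lower the
top-`k` sums, which gives majorization. Conversely, transpositions are T-transforms, so both
vectors may be sorted decreasingly, where majorization becomes domination of prefix sums. If
`p ≠ q`, let `k` be the first index with `p k < q k` and `j` the last index before `k` with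
`q j < p j`. Moving `min (p j - q j) (q k - p k)` from `p j` to `p k` is a T-transform because
`q` is sorted, keeps the prefix domination because `p = q` strictly between `j` and `k`, and
makes one more coordinate agree with `q`. -/

open Finset Matrix Relation

lemma Finset.sum_le_sum_of_card_eq_of_forall_le {ι M : Type*} [AddCommMonoid M] [LinearOrder M]
    [IsOrderedAddMonoid M] {f : ι → M} {s t : Finset ι} (hst : #s = #t)
    (h : ∀ i ∈ s, ∀ j ∈ t, f i ≤ f j) : ∑ i ∈ s, f i ≤ ∑ j ∈ t, f j := by
  rcases t.eq_empty_or_nonempty with rfl | ht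
  · simp [card_eq_zero.1 hst]
  calc ∑ i ∈ s, f i ≤ #s • t.inf' ht f :=
        sum_le_card_nsmul _ _ _ fun i hi => le_inf' ht f fun j hj => h i hi j hj
    _ = #t • t.inf' ht f := by rw [hst]
    _ ≤ ∑ j ∈ t, f j := card_nsmul_le_sum _ _ _ fun j hj => inf'_le f hj

lemma Finset.card_filter_ne_lt_card_filter_ne {α β : Type*} [Fintype α] [DecidableEq β]
    {f f' g : α → β} {a : α} (ha : f a ≠ g a) (ha' : f' a = g a) (h : ∀ i, f' i ≠ g i → f i ≠ g i) :
    #{i | f' i ≠ g i} < #{i | f i ≠ g i} :=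
  card_lt_card <| (ssubset_iff_of_subset (monotone_filter_right _ fun i _ => h i)).2
    ⟨a, by simp [ha], by simp [ha']⟩

lemma exists_perm_antitone_comp {α : Type*} [LinearOrder α] {n : ℕ} (r : Fin n → α) :
    ∃ σ : Equiv.Perm (Fin n), Antitone (r ∘ σ) :=
  ⟨Tuple.sort (OrderDual.toDual ∘ r), monotone_toDual_comp_iff.1 (Tuple.monotone_sort _)⟩

section TopSum

variable {n : ℕ}

lemma bddAbove_topSum_set (r : Fin n → ℝ) (k : ℕ) :
    BddAbove {x : ℝ | ∃ s : Finset (Fin n), #s = k ∧ x = ∑ i ∈ s, r i} :=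
  ((Set.finite_range fun s : Finset (Fin n) => ∑ i ∈ s, r i).subset
    (by rintro _ ⟨s, -, rfl⟩; exact ⟨s, rfl⟩)).bddAbove

lemma sum_le_topSum (r : Fin n → ℝ) (s : Finset (Fin n)) : ∑ i ∈ s, r i ≤ topSum r #s :=
  le_csSup (bddAbove_topSum_set r #s) ⟨s, rfl, rfl⟩

lemma topSum_le {r : Fin n → ℝ} {k : ℕ} {c : ℝ} (hk : k ≤ n)
    (h : ∀ s : Finset (Fin n), #s = k → ∑ i ∈ s, r i ≤ c) : topSum r k ≤ c := by
  obtain ⟨s, -, hs⟩ := exists_subset_card_eq (s := (univ : Finset (Fin n))) (by simpa using hk)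
  exact csSup_le ⟨_, s, hs, rfl⟩ (by rintro _ ⟨s, hs, rfl⟩; exact h s hs)

lemma topSum_n_eq_sum (r : Fin n → ℝ) : topSum r n = ∑ i, r i :=
  le_antisymm (topSum_le le_rfl fun s hs => by rw [eq_univ_of_card s (by simpa using hs)])
    (by simpa using sum_le_topSum r univ)

lemma topSum_comp_perm (r : Fin n → ℝ) (σ : Equiv.Perm (Fin n)) (k : ℕ) :
    topSum (r ∘ σ) k = topSum r k := by
  refine congrArg sSup (Set.ext fun x => ⟨?_, ?_⟩)
  · rintro ⟨s, rfl, rfl⟩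
    exact ⟨s.map σ.toEmbedding, card_map _, by simp [sum_map]⟩
  · rintro ⟨s, rfl, rfl⟩
    exact ⟨s.map σ.symm.toEmbedding, card_map _, by simp [sum_map]⟩

lemma majP_comp_perm_iff {p q : Fin n → ℝ} (σ τ : Equiv.Perm (Fin n)) :
    MajP (p ∘ σ) (q ∘ τ) ↔ MajP p q := by
  simp only [MajP, topSum_comp_perm]

lemma majP_refl (p : Fin n → ℝ) : MajP p p := ⟨fun _ _ => le_rfl, rfl⟩

lemma MajP.trans {p q r : Fin n → ℝ} (hpq : MajP p q) (hqr : MajP q r) : MajP p r :=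
  ⟨fun k hk => (hqr.1 k hk).trans (hpq.1 k hk), hpq.2.trans hqr.2⟩

end TopSum

section PrefixSum

variable {n : ℕ}

def prefixSum (r : Fin n → ℝ) (m : ℕ) : ℝ := ∑ i ∈ ({i | (i : ℕ) < m} : Finset (Fin n)), r i

lemma prefixSum_succ (r : Fin n → ℝ) {m : ℕ} (hm : m < n) :
    prefixSum r (m + 1) = prefixSum r m + r ⟨m, hm⟩ := by
  have : ({i : Fin n | (i : ℕ) < m + 1} : Finset (Fin n)) =
      insert (⟨m, hm⟩ : Fin n) ({i | (i : ℕ) < m} : Finset (Fin n)) := by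
    ext i; simp [Fin.ext_iff, Nat.le_iff_lt_or_eq, or_comm]
  rw [prefixSum, this, sum_insert (by simp), add_comm]
  rfl

lemma prefixSum_of_le (r : Fin n → ℝ) {m : ℕ} (hm : n ≤ m) : prefixSum r m = ∑ i, r i := by
  rw [prefixSum, filter_true_of_mem fun i _ => i.2.trans_le hm]

lemma sum_le_prefixSum_of_antitone {r : Fin n → ℝ} (hr : Antitone r) (s : Finset (Fin n)) :
    ∑ i ∈ s, r i ≤ prefixSum r #s := by
  set P : Finset (Fin n) := {i | (i : ℕ) < #s}
  have hP : #P = #s := by simpa [P, Fin.card_filter_val_lt] using card_le_univ s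
  rw [prefixSum, ← sum_sdiff_le_sum_sdiff]
  refine sum_le_sum_of_card_eq_of_forall_le (card_sdiff_comm hP.symm) fun i hi j hj => hr ?_
  simp only [mem_sdiff, mem_filter, mem_univ, true_and] at hi hj
  exact Fin.le_def.2 (by omega)

lemma topSum_eq_prefixSum {r : Fin n → ℝ} (hr : Antitone r) {k : ℕ} (hk : k ≤ n) :
    topSum r k = prefixSum r k := by
  refine le_antisymm (topSum_le hk fun s hs => hs ▸ sum_le_prefixSum_of_antitone hr s) ?_
  have hP : #({i | (i : ℕ) < k} : Finset (Fin n)) = k := by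
    simp [Fin.card_filter_val_lt, hk]
  calc prefixSum r k ≤ topSum r #({i | (i : ℕ) < k} : Finset (Fin n)) := sum_le_topSum r _
    _ = topSum r k := by rw [hP]

end PrefixSum

section TTransform

variable {n : ℕ}

def TTransformStep (p q : Fin n → ℝ) : Prop :=
  ∃ T : Matrix (Fin n) (Fin n) ℝ, IsTTransform T ∧ q = T *ᵥ p

lemma swapMat_mulVec (i j : Fin n) (r : Fin n → ℝ) : swapMat i j *ᵥ r = r ∘ Equiv.swap i j := by
  ext a
  simp [swapMat, mulVec, dotProduct, @eq_comm _ a, Equiv.swap_apply_eq_iff]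

lemma tTransform_mulVec (t : ℝ) (i j : Fin n) (r : Fin n → ℝ) :
    (t • (1 : Matrix (Fin n) (Fin n) ℝ) + (1 - t) • swapMat i j) *ᵥ r =
      t • r + (1 - t) • (r ∘ Equiv.swap i j) := by
  rw [add_mulVec, smul_mulVec, smul_mulVec, one_mulVec, swapMat_mulVec]

lemma tTransformStep_comp_swap {i j : Fin n} (hij : i ≠ j) (r : Fin n → ℝ) :
    TTransformStep r (r ∘ Equiv.swap i j) :=
  ⟨_, ⟨0, ⟨le_rfl, zero_le_one⟩, i, j, hij, rfl⟩, by rw [tTransform_mulVec]; simp⟩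

lemma reflTransGen_comp_perm (σ : Equiv.Perm (Fin n)) (r : Fin n → ℝ) :
    ReflTransGen TTransformStep r (r ∘ σ) := by
  induction σ using Equiv.Perm.swap_induction_on generalizing r with
  | one => exact .refl
  | swap_mul σ i j hij ih =>
    exact .head (tTransformStep_comp_swap hij r) (ih _)

lemma tTransformStep_transfer {r : Fin n → ℝ} {i j : Fin n} (hij : i ≠ j) {δ : ℝ}
    (hδ : 0 ≤ δ) (hδr : δ ≤ r i - r j) :
    TTransformStep r (r + δ • (Pi.single j 1 - Pi.single i 1)) := by
  -- when `r i = r j` we have `δ = 0`, and the junk value `δ / 0 = 0` gives `t = 1`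
  set t := 1 - δ / (r i - r j)
  have hδt : (1 - t) * (r i - r j) = δ := by
    simpa [t] using div_mul_cancel_of_imp fun h => le_antisymm (h ▸ hδr) hδ
  have ht : t ∈ Set.Icc (0 : ℝ) 1 :=
    ⟨sub_nonneg.2 (div_le_one_of_le₀ hδr (hδ.trans hδr)),
      sub_le_self _ (div_nonneg hδ (hδ.trans hδr))⟩
  refine ⟨_, ⟨t, ht, i, j, hij, rfl⟩, ?_⟩
  rw [tTransform_mulVec]
  ext a
  simp only [Pi.add_apply, Pi.smul_apply, Pi.sub_apply, Function.comp_apply, smul_eq_mul]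
  rcases eq_or_ne a i with rfl | hai
  · rw [Equiv.swap_apply_left, Pi.single_eq_same, Pi.single_eq_of_ne hij]
    linear_combination hδt
  rcases eq_or_ne a j with rfl | haj
  · rw [Equiv.swap_apply_right, Pi.single_eq_same, Pi.single_eq_of_ne hai]
    linear_combination -hδt
  rw [Equiv.swap_apply_of_ne_of_ne hai haj, Pi.single_eq_of_ne hai, Pi.single_eq_of_ne haj]
  ring

lemma TTransformStep.majP {p q : Fin n → ℝ} (h : TTransformStep p q) : MajP p q := by
  obtain ⟨_, ⟨t, ⟨ht0, ht1⟩, i, j, -, rfl⟩, rfl⟩ := h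
  rw [tTransform_mulVec]
  have hsum (s : Finset (Fin n)) : ∑ a ∈ s, (t • p + (1 - t) • (p ∘ Equiv.swap i j)) a =
      t * ∑ a ∈ s, p a + (1 - t) * ∑ a ∈ s, p (Equiv.swap i j a) := by
    simp [sum_add_distrib, mul_sum]
  refine ⟨fun k hk => topSum_le hk fun s hs => ?_, ?_⟩
  · have h₁ := sum_le_topSum p s
    have h₂ : ∑ a ∈ s, p (Equiv.swap i j a) ≤ topSum p #s :=
      topSum_comp_perm p (Equiv.swap i j) #s ▸ sum_le_topSum (p ∘ Equiv.swap i j) s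
    rw [hsum, ← hs]
    nlinarith
  · rw [topSum_n_eq_sum, topSum_n_eq_sum, hsum, Equiv.sum_comp]
    ring

lemma majP_of_reflTransGen {p q : Fin n → ℝ} (h : ReflTransGen TTransformStep p q) : MajP p q := by
  induction h with
  | refl => exact majP_refl p
  | tail _ hstep ih => exact ih.trans hstep.majP

lemma reflTransGen_iff_exists_list {p q : Fin n → ℝ} :
    ReflTransGen TTransformStep p q ↔ ∃ L : List (Matrix (Fin n) (Fin n) ℝ),
      (∀ T ∈ L, IsTTransform T) ∧ q = L.prod *ᵥ p := by
  constructor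
  · intro h
    induction h with
    | refl => exact ⟨[], by simp⟩
    | tail _ hstep ih =>
      obtain ⟨L, hL, rfl⟩ := ih
      obtain ⟨T, hT, rfl⟩ := hstep
      exact ⟨T :: L, List.forall_mem_cons.2 ⟨hT, hL⟩, by simp [mulVec_mulVec]⟩
  · rintro ⟨L, hL, rfl⟩
    induction L with
    | nil => simpa using .refl
    | cons T L ih =>
      simp only [List.mem_cons, forall_eq_or_imp] at hL
      rw [List.prod_cons, ← mulVec_mulVec]
      exact (ih hL.2).tail ⟨T, hL.1, rfl⟩

end TTransform

section PrefixMajorizes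

variable {n : ℕ} {p q : Fin n → ℝ}

def PrefixMajorizes (p q : Fin n → ℝ) : Prop :=
  (∀ m, prefixSum q m ≤ prefixSum p m) ∧ ∑ i, p i = ∑ i, q i

lemma MajP.prefixMajorizes (h : MajP p q) (hp : Antitone p) (hq : Antitone q) :
    PrefixMajorizes p q := by
  have hsum : ∑ i, p i = ∑ i, q i := by simpa only [topSum_n_eq_sum] using h.2
  refine ⟨fun m => ?_, hsum⟩
  rcases le_total m n with hm | hm
  · rw [← topSum_eq_prefixSum hp hm, ← topSum_eq_prefixSum hq hm]
    exact h.1 m hm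
  · rw [prefixSum_of_le p hm, prefixSum_of_le q hm, hsum]

lemma prefixSum_transfer (r : Fin n → ℝ) (i j : Fin n) (δ : ℝ) (m : ℕ) :
    prefixSum (r + δ • (Pi.single j 1 - Pi.single i 1)) m =
      prefixSum r m + δ * ((if (j : ℕ) < m then 1 else 0) - (if (i : ℕ) < m then 1 else 0)) := by
  simp [prefixSum, sum_add_distrib, ← mul_sum, sum_sub_distrib, sum_pi_single']

lemma PrefixMajorizes.exists_pivot (h : PrefixMajorizes p q) (hpq : p ≠ q) :
    ∃ j k : Fin n, j < k ∧ q j < p j ∧ p k < q k ∧ ∀ i, j < i → i < k → p i = q i := by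
  have hex : ∃ i, p i < q i := by
    by_contra! hle
    exact hpq (funext fun i => ((sum_eq_sum_iff_of_le fun i _ => hle i).1 h.2.symm i
      (mem_univ i)).symm)
  obtain ⟨k, hk, hkmin⟩ := wellFounded_lt.has_min {i | p i < q i} hex
  have hex' : ∃ i, i < k ∧ q i < p i := by
    by_contra! hle
    have hpre : prefixSum p k = prefixSum q k :=
      sum_congr rfl fun i hi => le_antisymm (hle i (by simpa using hi))
        (not_lt.1 fun hlt => hkmin i hlt (by simpa using hi))
    have := h.1 (k + 1)
    rw [prefixSum_succ p k.2, prefixSum_succ q k.2, hpre] at this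
    exact absurd this (by simpa using hk)
  obtain ⟨j, ⟨hjk, hj⟩, hjmax⟩ := wellFounded_gt.has_min {i | i < k ∧ q i < p i} hex'
  refine ⟨j, k, hjk, hj, hk, fun i hji hik => le_antisymm ?_ ?_⟩
  · exact not_lt.1 fun hlt => hjmax i ⟨hik, hlt⟩ hji
  · exact not_lt.1 fun hlt => hkmin i hlt hik

lemma PrefixMajorizes.gap_le_prefixSum_sub (h : PrefixMajorizes p q) {j k : Fin n}
    (hmid : ∀ i, j < i → i < k → p i = q i) {m : ℕ} (hjm : (j : ℕ) < m) (hmk : m ≤ k) :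
    p j - q j ≤ prefixSum p m - prefixSum q m := by
  induction m, hjm using Nat.le_induction with
  | base =>
    have := h.1 j
    rw [prefixSum_succ p j.2, prefixSum_succ q j.2]
    linarith
  | succ m hjm ih =>
    have hmn : m < n := by omega
    have := hmid ⟨m, hmn⟩ (Fin.lt_def.2 hjm) (Fin.lt_def.2 hmk)
    rw [prefixSum_succ p hmn, prefixSum_succ q hmn]
    linarith [ih (by omega)]

lemma PrefixMajorizes.transfer (h : PrefixMajorizes p q) {j k : Fin n} (hjk : j < k)
    (hmid : ∀ i, j < i → i < k → p i = q i) {δ : ℝ} (hδ : δ ≤ p j - q j) :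
    PrefixMajorizes (p + δ • (Pi.single k 1 - Pi.single j 1)) q := by
  refine ⟨fun m => ?_, by simp [sum_add_distrib, h.2, ← mul_sum, sum_sub_distrib]⟩
  have hm := h.1 m
  rw [prefixSum_transfer]
  by_cases hjm : (j : ℕ) < m
  · by_cases hkm : (k : ℕ) < m
    · rw [if_pos hjm, if_pos hkm]
      linarith
    · have := h.gap_le_prefixSum_sub hmid hjm (not_lt.1 hkm)
      rw [if_pos hjm, if_neg hkm]
      linarith
  · have hkm : ¬ (k : ℕ) < m := by have := Fin.lt_def.1 hjk; omega
    rw [if_neg hjm, if_neg hkm]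
    linarith

lemma PrefixMajorizes.exists_step (hq : Antitone q) (h : PrefixMajorizes p q) (hpq : p ≠ q) :
    ∃ p', TTransformStep p p' ∧ PrefixMajorizes p' q ∧ #{i | p' i ≠ q i} < #{i | p i ≠ q i} := by
  obtain ⟨j, k, hjk, hj, hk, hmid⟩ := h.exists_pivot hpq
  set δ := min (p j - q j) (q k - p k)
  have hδ₀ : 0 < δ := lt_min (sub_pos.2 hj) (sub_pos.2 hk)
  have hδj : δ ≤ p j - q j := min_le_left _ _
  have hδk : δ ≤ q k - p k := min_le_right _ _
  have hqjk : q k ≤ q j := hq hjk.le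
  set p' := p + δ • (Pi.single k 1 - Pi.single j 1)
  have hp'j : p' j = p j - δ := by simp [p', hjk.ne, sub_eq_add_neg]
  have hp'k : p' k = p k + δ := by simp [p', hjk.ne']
  refine ⟨p', tTransformStep_transfer hjk.ne hδ₀.le (by linarith), h.transfer hjk hmid hδj, ?_⟩
  obtain ⟨a, ha, ha'⟩ : ∃ a, p a ≠ q a ∧ p' a = q a := by
    rcases min_choice (p j - q j) (q k - p k) with hmin | hmin
    · exact ⟨j, hj.ne', by rw [hp'j, show δ = p j - q j from hmin]; ring⟩
    · exact ⟨k, hk.ne, by rw [hp'k, show δ = q k - p k from hmin]; ring⟩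
  refine card_filter_ne_lt_card_filter_ne ha ha' fun i hi => ?_
  by_cases hij : i = j
  · exact hij ▸ hj.ne'
  by_cases hik : i = k
  · exact hik ▸ hk.ne
  simpa [p', hij, hik] using hi

lemma reflTransGen_of_prefixMajorizes (hq : Antitone q) (h : PrefixMajorizes p q) :
    ReflTransGen TTransformStep p q := by
  induction hN : #{i | p i ≠ q i} using Nat.strong_induction_on generalizing p with
  | _ N ih =>
    by_cases hpq : p = q
    · exact hpq ▸ .refl
    obtain ⟨p', hstep, h', hlt⟩ := h.exists_step hq hpq
    exact .head hstep (ih _ (hN ▸ hlt) h' rfl)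

end PrefixMajorizes

theorem majP_iff_finite_TTransforms_general {n : ℕ} (p q : Fin n → ℝ) :
    MajP p q ↔ ∃ L : List (Matrix (Fin n) (Fin n) ℝ),
      (∀ T ∈ L, IsTTransform T) ∧ q = L.prod.mulVec p := by
  rw [← reflTransGen_iff_exists_list]
  refine ⟨fun h => ?_, majP_of_reflTransGen⟩
  obtain ⟨σ, hσ⟩ := exists_perm_antitone_comp p
  obtain ⟨τ, hτ⟩ := exists_perm_antitone_comp q
  have hsorted := ((majP_comp_perm_iff σ τ).2 h).prefixMajorizes hσ hτ
  have hreach := (reflTransGen_comp_perm σ p).trans <|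
    (reflTransGen_of_prefixMajorizes hτ hsorted).trans (reflTransGen_comp_perm τ⁻¹ (q ∘ τ))
  simpa [Function.comp_assoc] using hreach

/-- `p ≻ q` iff `q` is obtained from `p` by a finite composition of `T`-transforms. -/
theorem majP_iff_finite_TTransforms {n : ℕ} (p q : Fin n → ℝ)
    (hp : ProbVec p) (hq : ProbVec q) :
    MajP p q ↔ ∃ L : List (Matrix (Fin n) (Fin n) ℝ),
      (∀ T ∈ L, IsTTransform T) ∧ q = L.prod.mulVec p :=
  majP_iff_finite_TTransforms_general p q
end

section
/- For every α ∈ (0,∞), α ≠ 1, the Rényi entropy H_α is quasi-concave on Prob(n): H_α(tp + (1−t)q) ≥ min{H_α(p), H_α(q)} for all t ∈ [0,1]. -/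
/-- The α-Rényi entropy (logarithm base 2). -/
noncomputable def renyiEntropy {n : ℕ} (α : ℝ) (p : Fin n → ℝ) : ℝ :=
  (1 / (1 - α)) * Real.logb 2 (∑ x, p x ^ α)

lemma sum_rpow_pos {n : ℕ} {α : ℝ} (h0 : 0 < α) {p : Fin n → ℝ} (hp : ProbVec p) :
    0 < ∑ x, p x ^ α := by
  obtain ⟨i, hi⟩ : ∃ i, p i ≠ 0 := by
    by_contra h
    push_neg at h
    have := hp.2
    simp [h] at this
  have hi' : 0 < p i := lt_of_le_of_ne (hp.1 i) (Ne.symm hi)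
  refine Finset.sum_pos' (fun j _ => Real.rpow_nonneg (hp.1 j) α) ⟨i, Finset.mem_univ i, ?_⟩
  exact Real.rpow_pos_of_pos hi' α

/-- For every `α ∈ (0,∞)`, `α ≠ 1`, the Rényi entropy is quasi-concave on `Prob(n)`. -/
theorem renyiEntropy_quasiconcave {n : ℕ} (α : ℝ) (h0 : 0 < α) (h1 : α ≠ 1)
    (p q : Fin n → ℝ) (hp : ProbVec p) (hq : ProbVec q)
    (t : ℝ) (ht : t ∈ Set.Icc (0 : ℝ) 1) :
    min (renyiEntropy α p) (renyiEntropy α q) ≤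
      renyiEntropy α (t • p + (1 - t) • q) := by
  obtain ⟨ht0, ht1⟩ := ht
  have ht1' : 0 ≤ 1 - t := by linarith
  have hmix : ProbVec (t • p + (1 - t) • q) := by
    constructor
    · intro i
      have := hp.1 i
      have := hq.1 i
      simp only [Pi.add_apply, Pi.smul_apply, smul_eq_mul]
      nlinarith
    · simp only [Pi.add_apply, Pi.smul_apply, smul_eq_mul]
      rw [Finset.sum_add_distrib, ← Finset.mul_sum, ← Finset.mul_sum, hp.2, hq.2]
      ring
  set Sp := ∑ x, p x ^ α with hSp
  set Sq := ∑ x, q x ^ α with hSq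
  set Sm := ∑ x, (t • p + (1 - t) • q) x ^ α with hSm
  have hSpP : 0 < Sp := sum_rpow_pos h0 hp
  have hSqP : 0 < Sq := sum_rpow_pos h0 hq
  have hSmP : 0 < Sm := sum_rpow_pos h0 hmix
  rcases lt_or_gt_of_ne h1 with hα | hα
  · -- α < 1 : concave, 1/(1-α) > 0
    have hc : 0 < 1 / (1 - α) := div_pos one_pos (by linarith)
    have key : t * Sp + (1 - t) * Sq ≤ Sm := by
      rw [hSp, hSq, hSm, Finset.mul_sum, Finset.mul_sum, ← Finset.sum_add_distrib]
      refine Finset.sum_le_sum fun i _ => ?_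
      have := (Real.concaveOn_rpow h0.le hα.le).2 (Set.mem_Ici.mpr (hp.1 i))
        (Set.mem_Ici.mpr (hq.1 i)) ht0 ht1' (by ring)
      simpa [smul_eq_mul] using this
    rcases le_total Sp Sq with h | h
    · refine le_trans (min_le_left _ _) ?_
      refine mul_le_mul_of_nonneg_left ?_ hc.le
      refine Real.logb_le_logb_of_le one_lt_two hSpP ?_
      nlinarith
    · refine le_trans (min_le_right _ _) ?_
      refine mul_le_mul_of_nonneg_left ?_ hc.le
      refine Real.logb_le_logb_of_le one_lt_two hSqP ?_
      nlinarith
  · -- α > 1 : convex, 1/(1-α) < 0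
    have hc : 1 / (1 - α) < 0 := by
      apply div_neg_of_pos_of_neg one_pos
      linarith
    have key : Sm ≤ t * Sp + (1 - t) * Sq := by
      rw [hSp, hSq, hSm, Finset.mul_sum, Finset.mul_sum, ← Finset.sum_add_distrib]
      refine Finset.sum_le_sum fun i _ => ?_
      have := (convexOn_rpow hα.le).2 (Set.mem_Ici.mpr (hp.1 i))
        (Set.mem_Ici.mpr (hq.1 i)) ht0 ht1' (by ring)
      simpa [smul_eq_mul] using this
    rcases le_total Sp Sq with h | h
    · refine le_trans (min_le_right _ _) ?_
      refine mul_le_mul_of_nonpos_left ?_ hc.le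
      refine Real.logb_le_logb_of_le one_lt_two hSmP ?_
      nlinarith
    · refine le_trans (min_le_left _ _) ?_
      refine mul_le_mul_of_nonpos_left ?_ hc.le
      refine Real.logb_le_logb_of_le one_lt_two hSmP ?_
      nlinarith
end

section
/- If f : (0,∞) → R is convex with f(1) = 0, then the f-divergence D_f(p‖q) = Σ_x q_x f(p_x/q_x) satisfies the data processing inequality: D_f(Ep‖Eq) ≤ D_f(p‖q) for every column stochastic matrix E ∈ Stoch(m,n) and all p, q ∈ Prob(n). -/
/-- A column stochastic matrix: nonnegative entries, each column sums to 1. -/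
def ColStoch {m n : ℕ} (M : Matrix (Fin m) (Fin n) ℝ) : Prop :=
  (∀ i j, 0 ≤ M i j) ∧ ∀ j, ∑ i, M i j = 1

/-- Data processing inequality for `f`-divergences: if `f` is convex with
`f(1) = 0`, then `D_f(Ep‖Eq) ≤ D_f(p‖q)` for every column stochastic `E`
(assuming, to avoid limit conventions, `q` and `Eq` have positive entries). -/
theorem fDivergence_DPI {m n : ℕ} (f : ℝ → ℝ)
    (hf : ConvexOn ℝ (Set.Ici (0 : ℝ)) f) (hf1 : f 1 = 0)
    (p q : Fin n → ℝ) (hp : ProbVec p) (hq : ProbVec q)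
    (hqpos : ∀ x, 0 < q x)
    (E : Matrix (Fin m) (Fin n) ℝ) (hE : ColStoch E)
    (hEq : ∀ y, 0 < E.mulVec q y) :
    ∑ y, E.mulVec q y * f (E.mulVec p y / E.mulVec q y) ≤
      ∑ x, q x * f (p x / q x) := by
  have key : ∀ y, E.mulVec q y * f (E.mulVec p y / E.mulVec q y) ≤
      ∑ x, E y x * q x * f (p x / q x) := by
    intro y
    have hQ : (0:ℝ) < E.mulVec q y := hEq y
    set w : Fin n → ℝ := fun x => E y x * q x / E.mulVec q y with hw
    have hw0 : ∀ x ∈ Finset.univ, 0 ≤ w x := fun x _ =>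
      div_nonneg (mul_nonneg (hE.1 y x) (hqpos x).le) hQ.le
    have hw1 : ∑ x, w x = 1 := by
      rw [← Finset.sum_div, div_eq_one_iff_eq hQ.ne']
      rfl
    have hmem : ∀ x ∈ Finset.univ, p x / q x ∈ Set.Ici (0:ℝ) := fun x _ =>
      div_nonneg (hp.1 x) (hqpos x).le
    have hsum : ∑ x, w x • (p x / q x) = E.mulVec p y / E.mulVec q y := by
      rw [eq_div_iff hQ.ne', Finset.sum_mul]
      simp only [smul_eq_mul, hw, Matrix.mulVec, dotProduct]
      simp only [Matrix.mulVec, dotProduct] at hQ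
      refine Finset.sum_congr rfl fun x _ => ?_
      have h1 := hQ.ne'
      have h2 := (hqpos x).ne'
      field_simp
    have := hf.map_sum_le hw0 hw1 hmem
    rw [hsum] at this
    calc E.mulVec q y * f (E.mulVec p y / E.mulVec q y)
        ≤ E.mulVec q y * ∑ x, w x • f (p x / q x) :=
          mul_le_mul_of_nonneg_left this hQ.le
      _ = ∑ x, E y x * q x * f (p x / q x) := by
          rw [Finset.mul_sum]
          refine Finset.sum_congr rfl fun x _ => ?_
          simp only [smul_eq_mul, hw]
          field_simp
  calc ∑ y, E.mulVec q y * f (E.mulVec p y / E.mulVec q y)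
      ≤ ∑ y, ∑ x, E y x * q x * f (p x / q x) := Finset.sum_le_sum fun y _ => key y
    _ = ∑ x, q x * f (p x / q x) := by
        rw [Finset.sum_comm]
        refine Finset.sum_congr rfl fun x _ => ?_
        rw [← Finset.sum_mul, ← Finset.sum_mul, hE.2 x, one_mul]
end
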